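/- arXiv:1510.01540 — 2 statements merged into one kernel-verified Lean document; each statement's English description precedes it below -/
import Mathlib

section
/- Fix real constants ε_1, …, ε_n and for each j and k ≥ 0 define the characteristic speed polynomial λ_j^k(x) = Σ_{l+m=k, l,m ≥ 0} x_j^l F^m(x), where F^m are the Lauricella coefficient polynomials. Then for all i ≠ j and all k ≥ 0, the polynomial identity (x_i − x_j) · ∂λ_j^k/∂x_i = ε_i · (λ_i^k − λ_j^k) holds in ℝ[x_1, …, x_n]. Consequently the ratio (∂λ_j^k/∂x_i)/(λ_i^k − λ_j^k) equals ε_i/(x_i − x_j) and is independent of k, which is the Tsarev compatibility condition for the commuting hierarchy of diagonal hydrodynamic type systems. -/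
open MvPolynomial Finset

noncomputable def poch (ε : ℝ) (t : ℕ) : ℝ :=
  (ascPochhammer ℝ t).eval ε / (Nat.factorial t : ℝ)

lemma poch_zero (ε : ℝ) : poch ε 0 = 1 := by simp [poch]

lemma poch_succ (ε : ℝ) (s : ℕ) : (s + 1 : ℝ) * poch ε (s+1) = ε * poch (ε+1) s := by
  have h : (ascPochhammer ℝ (s+1)).eval ε = ε * (ascPochhammer ℝ s).eval (ε+1) := by
    rw [ascPochhammer_succ_left]
    simp [Polynomial.eval_comp]
  have hf : (Nat.factorial s : ℝ) ≠ 0 := Nat.cast_ne_zero.mpr (Nat.factorial_ne_zero s)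
  rw [poch, poch, h, Nat.factorial_succ]
  push_cast
  field_simp

lemma poch_sum (ε : ℝ) (s : ℕ) :
    ∑ t ∈ range (s+1), poch ε t = poch (ε+1) s := by
  induction s with
  | zero => simp [poch]
  | succ s ih =>
    rw [Finset.sum_range_succ, ih]
    have h : (ascPochhammer ℝ (s+1)).eval (ε+1) = (ascPochhammer ℝ s).eval (ε+1) * (ε+1+s) := by
      rw [ascPochhammer_succ_right]; simp
    have h2 : (ascPochhammer ℝ (s+1)).eval ε = ε * (ascPochhammer ℝ s).eval (ε+1) := by
      rw [ascPochhammer_succ_left]; simp [Polynomial.eval_comp]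
    have hf : (Nat.factorial s : ℝ) ≠ 0 := Nat.cast_ne_zero.mpr (Nat.factorial_ne_zero s)
    have hs : ((s:ℝ) + 1) ≠ 0 := by positivity
    simp only [poch, h, h2, Nat.factorial_succ]
    push_cast
    field_simp
    ring


/-- The Lauricella coefficient polynomials
`F^k(x) = Σ_{i₁+⋯+iₙ=k} ∏_j ((ε_j)_{i_j}/i_j!) x_j^{i_j}`. -/
noncomputable def lauricellaF (n : ℕ) (ε : Fin n → ℝ) (k : ℕ) :
    MvPolynomial (Fin n) ℝ :=
  ∑ d ∈ Finset.Nat.antidiagonalTuple n k,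
    C (∏ j, (ascPochhammer ℝ (d j)).eval (ε j) / (Nat.factorial (d j) : ℝ)) *
      ∏ j, (X j : MvPolynomial (Fin n) ℝ) ^ (d j)

/-- The characteristic speed polynomials `λ_j^k(x) = Σ_{l+m=k} x_j^l F^m(x)`. -/
noncomputable def lam (n : ℕ) (ε : Fin n → ℝ) (j : Fin n) (k : ℕ) :
    MvPolynomial (Fin n) ℝ :=
  ∑ lm ∈ Finset.HasAntidiagonal.antidiagonal k, X j ^ lm.1 * lauricellaF n ε lm.2

lemma monomial_eq_prod {n : ℕ} (d : Fin n → ℕ) (a : ℝ) :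
    (monomial (Finsupp.equivFunOnFinite.symm d) a : MvPolynomial (Fin n) ℝ)
      = C a * ∏ j, (X j : MvPolynomial (Fin n) ℝ) ^ (d j) := by
  rw [monomial_eq]
  congr 1
  rw [Finsupp.prod_fintype]
  · simp
  · intro j; simp

lemma lauricellaF_eq (n : ℕ) (ε : Fin n → ℝ) (k : ℕ) :
    lauricellaF n ε k = ∑ d ∈ Finset.Nat.antidiagonalTuple n k,
      monomial (Finsupp.equivFunOnFinite.symm d) (∏ j, poch (ε j) (d j)) := by
  unfold lauricellaF
  refine Finset.sum_congr rfl fun d _ => ?_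
  rw [monomial_eq_prod]
  rfl

lemma lauricellaF_zero (n : ℕ) (ε : Fin n → ℝ) : lauricellaF n ε 0 = 1 := by
  rw [lauricellaF_eq]
  simp [Finset.Nat.antidiagonalTuple_zero_right, poch]
  have : (Finsupp.equivFunOnFinite.symm (0 : Fin n → ℕ)) = 0 := by ext; simp
  rw [this, monomial_zero']
  simp

lemma lam_zero (n : ℕ) (ε : Fin n → ℝ) (j : Fin n) : lam n ε j 0 = 1 := by
  simp [lam, lauricellaF_zero]

lemma lam_succ (n : ℕ) (ε : Fin n → ℝ) (j : Fin n) (k : ℕ) :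
    lam n ε j (k+1) = X j * lam n ε j k + lauricellaF n ε (k+1) := by
  unfold lam
  rw [Finset.Nat.antidiagonal_succ, Finset.sum_cons, Finset.sum_map, Finset.mul_sum]
  simp only [pow_zero, one_mul, Function.Embedding.coe_prodMap, Function.Embedding.coeFn_mk, Function.Embedding.refl_apply, Prod.map_fst, Prod.map_snd]
  rw [add_comm]
  congr 1
  refine Finset.sum_congr rfl fun lm _ => ?_
  simp [pow_succ]
  ring

-- helpers

lemma sum_update_add {n : ℕ} (d : Fin n → ℕ) (i : Fin n) (b : ℕ) :
    (∑ j, Function.update d i b j) + d i = (∑ j, d j) + b := by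
  rw [Finset.sum_update_of_mem (Finset.mem_univ i)]
  rw [← Finset.add_sum_erase univ d (Finset.mem_univ i)]
  rw [Finset.sdiff_singleton_eq_erase]
  omega

lemma D_update_add {n : ℕ} (e : Fin n → ℕ) (i : Fin n) (l : ℕ) :
    Finsupp.single i l + Finsupp.equivFunOnFinite.symm e
      = Finsupp.equivFunOnFinite.symm (Function.update e i (e i + l)) := by
  ext a
  rcases eq_or_ne a i with rfl | h
  · simp [Finsupp.single_apply, add_comm]
  · simp [Finsupp.single_apply, Function.update_apply, h, h.symm]

lemma D_update_sub {n : ℕ} (d : Fin n → ℕ) (i : Fin n) (hd : d i ≠ 0) :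
    Finsupp.equivFunOnFinite.symm d - Finsupp.single i 1
      = Finsupp.equivFunOnFinite.symm (Function.update d i (d i - 1)) := by
  ext a
  rcases eq_or_ne a i with rfl | h
  · simp [Finsupp.single_apply]
  · simp [Finsupp.single_apply, Function.update_apply, h, h.symm]


lemma pderiv_lauricellaF {n : ℕ} (ε : Fin n → ℝ) (k : ℕ) (i : Fin n) :
    pderiv i (lauricellaF n ε (k+1)) = C (ε i) * lam n ε i k := by
  have hL : pderiv i (lauricellaF n ε (k+1))
      = ∑ m ∈ Finset.Nat.antidiagonalTuple n k,
          monomial (Finsupp.equivFunOnFinite.symm m)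
            (ε i * (poch (ε i + 1) (m i) * ∏ j ∈ univ.erase i, poch (ε j) (m j))) := by
    rw [lauricellaF_eq, map_sum]
    simp only [pderiv_monomial]
    have hcoe : ∀ d : Fin n → ℕ, (Finsupp.equivFunOnFinite.symm d) i = d i := fun _ => rfl
    simp only [hcoe]
    rw [← Finset.sum_filter_of_ne (p := fun d => d i ≠ 0)
      (fun d _ h => fun h0 => h (by rw [h0] ; simp))]
    refine Finset.sum_nbij' (fun d => Function.update d i (d i - 1))
      (fun m => Function.update m i (m i + 1)) ?_ ?_ ?_ ?_ ?_
    · intro d hd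
      rw [Finset.mem_filter, Finset.Nat.mem_antidiagonalTuple] at hd
      rw [Finset.Nat.mem_antidiagonalTuple]
      have := sum_update_add d i (d i - 1)
      omega
    · intro m hm
      rw [Finset.Nat.mem_antidiagonalTuple] at hm
      rw [Finset.mem_filter, Finset.Nat.mem_antidiagonalTuple]
      have := sum_update_add m i (m i + 1)
      constructor
      · omega
      · simp
    · intro d hd
      rw [Finset.mem_filter] at hd
      funext a
      rcases eq_or_ne a i with rfl | h
      · simp; omega
      · simp [Function.update_apply, h]
    · intro m hm
      funext a
      rcases eq_or_ne a i with rfl | h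
      · simp
      · simp [Function.update_apply, h]
    · intro d hd
      rw [Finset.mem_filter] at hd
      have hdi : d i ≠ 0 := hd.2
      rw [D_update_sub d i hdi]
      congr 1
      -- coefficient identity
      have hup : ∀ j, j ≠ i → Function.update d i (d i - 1) j = d j := by
        intro j hj; simp [Function.update_apply, hj]
      have hprod : ∏ j ∈ univ.erase i, poch (ε j) (Function.update d i (d i - 1) j)
          = ∏ j ∈ univ.erase i, poch (ε j) (d j) :=
        Finset.prod_congr rfl (fun j hj => by rw [hup j (Finset.mem_erase.mp hj).1])
      rw [Function.update_self, hprod]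
      rw [← Finset.mul_prod_erase univ (fun j => poch (ε j) (d j)) (Finset.mem_univ i)]
      have hps := poch_succ (ε i) (d i - 1)
      have hcast : ((d i - 1 : ℕ) : ℝ) + 1 = (d i : ℝ) := by
        have : d i - 1 + 1 = d i := Nat.succ_pred_eq_of_pos (Nat.pos_of_ne_zero hdi)
        exact_mod_cast congrArg (Nat.cast : ℕ → ℝ) this
      rw [hcast] at hps
      rw [Nat.sub_add_cancel (Nat.one_le_iff_ne_zero.mpr hdi)] at hps
      rw [← mul_assoc, ← hps]
      ring
  have hR : C (ε i) * lam n ε i k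
      = ∑ m ∈ Finset.Nat.antidiagonalTuple n k,
          monomial (Finsupp.equivFunOnFinite.symm m)
            (ε i * (poch (ε i + 1) (m i) * ∏ j ∈ univ.erase i, poch (ε j) (m j))) := by
    rw [lam, Finset.mul_sum]
    simp only [lauricellaF_eq, Finset.mul_sum, X_pow_eq_monomial, monomial_mul, one_mul,
      C_mul_monomial]
    rw [Finset.sum_sigma' (Finset.HasAntidiagonal.antidiagonal k)
      (fun lm => Finset.Nat.antidiagonalTuple n lm.2)
      (fun lm e => monomial (Finsupp.single i lm.1 + Finsupp.equivFunOnFinite.symm e)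
        (ε i * ∏ j, poch (ε j) (e j)))]
    have step1 : (∑ x ∈ (Finset.HasAntidiagonal.antidiagonal k).sigma
          (fun lm => Finset.Nat.antidiagonalTuple n lm.2),
        monomial (Finsupp.single i x.1.1 + Finsupp.equivFunOnFinite.symm x.2)
          (ε i * ∏ j, poch (ε j) (x.2 j)))
        = ∑ y ∈ (Finset.Nat.antidiagonalTuple n k).sigma (fun m => range (m i + 1)),
          monomial (Finsupp.equivFunOnFinite.symm y.1)
            (ε i * ∏ j, poch (ε j) (Function.update y.1 i (y.1 i - y.2) j)) := by
      refine Finset.sum_nbij'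
        (fun x => ⟨Function.update x.2 i (x.2 i + x.1.1), x.1.1⟩)
        (fun y => ⟨(y.2, k - y.2), Function.update y.1 i (y.1 i - y.2)⟩)
        ?_ ?_ ?_ ?_ ?_ <;> try dsimp only
      · rintro ⟨⟨l, m'⟩, e⟩ hx
        rw [Finset.mem_sigma, Finset.HasAntidiagonal.mem_antidiagonal,
          Finset.Nat.mem_antidiagonalTuple] at hx
        rw [Finset.mem_sigma, Finset.Nat.mem_antidiagonalTuple, Finset.mem_range]
        dsimp only at hx ⊢
        rw [Function.update_self]
        have := sum_update_add e i (e i + l)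
        omega
      · rintro ⟨m, l⟩ hy
        rw [Finset.mem_sigma, Finset.Nat.mem_antidiagonalTuple, Finset.mem_range] at hy
        rw [Finset.mem_sigma, Finset.HasAntidiagonal.mem_antidiagonal, Finset.Nat.mem_antidiagonalTuple]
        dsimp only at hy ⊢
        have h1 := sum_update_add m i (m i - l)
        have h2 : m i ≤ ∑ j, m j := Finset.single_le_sum (fun _ _ => Nat.zero_le _)
          (Finset.mem_univ i)
        omega
      · rintro ⟨⟨l, m'⟩, e⟩ hx
        rw [Finset.mem_sigma, Finset.HasAntidiagonal.mem_antidiagonal,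
          Finset.Nat.mem_antidiagonalTuple] at hx
        dsimp only at hx ⊢
        simp only [Sigma.ext_iff, heq_eq_eq, Prod.mk.injEq, Function.update_self]
        refine ⟨⟨trivial, by omega⟩, funext fun a => ?_⟩
        rcases eq_or_ne a i with rfl | h
        · simp
        · simp [Function.update_apply, h]
      · rintro ⟨m, l⟩ hy
        rw [Finset.mem_sigma, Finset.Nat.mem_antidiagonalTuple, Finset.mem_range] at hy
        dsimp only at hy ⊢
        simp only [Sigma.ext_iff, heq_eq_eq, Function.update_self]
        refine ⟨funext fun a => ?_, trivial⟩
        rcases eq_or_ne a i with rfl | h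
        · simp; omega
        · simp [Function.update_apply, h]
      · rintro ⟨⟨l, m'⟩, e⟩ hx
        dsimp only
        rw [D_update_add]
        congr 2
        refine Finset.prod_congr rfl fun a _ => ?_
        rcases eq_or_ne a i with rfl | h
        · simp
        · simp [Function.update_apply, h]
    rw [step1, Finset.sum_sigma (Finset.Nat.antidiagonalTuple n k) (fun m => range (m i + 1))
      (fun y => monomial (Finsupp.equivFunOnFinite.symm y.1)
        (ε i * ∏ j, poch (ε j) (Function.update y.1 i (y.1 i - y.2) j)))]
    dsimp only
    refine Finset.sum_congr rfl fun m hm => ?_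
    rw [← map_sum, ← Finset.mul_sum]
    congr 1
    congr 1
    have hterm : ∀ l ∈ range (m i + 1),
        ∏ j, poch (ε j) (Function.update m i (m i - l) j)
          = poch (ε i) (m i - l) * ∏ j ∈ univ.erase i, poch (ε j) (m j) := by
      intro l _
      rw [← Finset.mul_prod_erase univ (fun j => poch (ε j) (Function.update m i (m i - l) j))
        (Finset.mem_univ i), Function.update_self]
      congr 1
      exact Finset.prod_congr rfl (fun a ha => by
        simp [Function.update_apply, (Finset.mem_erase.mp ha).1])
    rw [Finset.sum_congr rfl hterm, ← Finset.sum_mul]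
    congr 1
    have hre := Finset.sum_range_reflect (fun t => poch (ε i) t) (m i + 1)
    rw [← poch_sum (ε i) (m i), ← hre]
    rfl
  rw [hL, hR]


/-- the polynomial identity
`(x_i - x_j) ∂λ_j^k/∂x_i = ε_i (λ_i^k - λ_j^k)` holds in `ℝ[x₁,…,xₙ]`;
consequently, wherever the denominators do not vanish, the ratio
`(∂λ_j^k/∂x_i)/(λ_i^k - λ_j^k)` equals `ε_i/(x_i - x_j)`, independently of `k`
(the Tsarev compatibility condition for the commuting hierarchy). -/
theorem lam_Tsarev_compatibility (n : ℕ) (ε : Fin n → ℝ) (k : ℕ)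
    (i j : Fin n) (hij : i ≠ j) :
    ((X i - X j) * pderiv i (lam n ε j k)
        = C (ε i) * (lam n ε i k - lam n ε j k))
    ∧ ∀ x : Fin n → ℝ, x i ≠ x j →
        eval x (lam n ε i k - lam n ε j k) ≠ 0 →
        eval x (pderiv i (lam n ε j k)) / eval x (lam n ε i k - lam n ε j k)
          = ε i / (x i - x j) := by
  have main : (X i - X j) * pderiv i (lam n ε j k)
      = C (ε i) * (lam n ε i k - lam n ε j k) := by
    induction k with
    | zero => simp [lam_zero]
    | succ k ih =>
      have hder : pderiv i (lam n ε j (k+1))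
          = X j * pderiv i (lam n ε j k) + C (ε i) * lam n ε i k := by
        rw [lam_succ, map_add, pderiv_mul, pderiv_X_of_ne hij.symm,
          pderiv_lauricellaF]
        ring
      rw [hder, lam_succ n ε i k, lam_succ n ε j k]
      linear_combination (X j : MvPolynomial (Fin n) ℝ) * ih
  refine ⟨main, fun x hx hne => ?_⟩
  have h := congrArg (eval x) main
  simp only [eval_mul, eval_sub, eval_X, eval_C] at h
  rw [div_eq_div_iff hne (sub_ne_zero.mpr hx), eval_sub]
  linear_combination h
end

section
/- Fix integers n ≥ 1 and m ≥ n, let p_k be the elementary Schur polynomials in n variables, and define Φ(t; y) = Σ_{k=0}^m t_k p_{k+1}(y). Let u : Ω → ℝ^n be a smooth map on an open set Ω ⊂ ℝ^{m+1} satisfying the critical equations Σ_{k=0}^m t_k p_{k+1−i}(u(t)) = 0 for all i ∈ {1, …, n} and t ∈ Ω. Then for every i ∈ {1, …, n} and every k ∈ {0, 1, …, m}: p_{k+1−i}(u(t)) + Σ_{j=1}^n Φ_{i,j}(t) · ∂u_j/∂t_k = 0, where Φ_{i,j}(t) := Σ_{l=0}^m t_l p_{l+1−i−j}(u(t)) is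 the second partial derivative ∂²Φ/∂y_i∂y_j evaluated at u(t). Moreover Φ_{i,j}(t) = 0 whenever i + j ≤ n, so the resulting linear system for ∂u/∂t_k is upper triangular (in reversed row order) with each anti-ordered diagonal constant. -/
open MvPolynomial

/-- The elementary Schur polynomials in `n` variables, with `p_k = 0` for `k < 0`. -/
noncomputable def schurP (n : ℕ) (k : ℤ) : MvPolynomial (Fin n) ℝ :=
  if k < 0 then 0
  else
    ∑ d ∈ Finset.filter
        (fun d : Fin n → ℕ => ∑ i, (i.1 + 1) * d i = k.toNat)
        (Fintype.piFinset fun _ => Finset.range (k.toNat + 1)),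
      C (∏ i, ((Nat.factorial (d i) : ℝ))⁻¹) *
        ∏ i, (X i : MvPolynomial (Fin n) ℝ) ^ d i

/-- `p_k` evaluated at a point of `ℝⁿ`. -/
noncomputable def schurPf (n : ℕ) (k : ℤ) (y : Fin n → ℝ) : ℝ :=
  eval y (schurP n k)

variable {n : ℕ}

/-- The index set for `schurP`. -/
def schurS (n K : ℕ) : Finset (Fin n → ℕ) :=
  Finset.filter (fun d : Fin n → ℕ => ∑ i, (i.1 + 1) * d i = K)
    (Fintype.piFinset fun _ => Finset.range (K + 1))

lemma mem_schurS {K : ℕ} {d : Fin n → ℕ} :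
    d ∈ schurS n K ↔ ∑ i, (i.1 + 1) * d i = K := by
  constructor
  · intro h; exact (Finset.mem_filter.1 h).2
  · intro h
    refine Finset.mem_filter.2 ⟨Fintype.mem_piFinset.2 fun i => ?_, h⟩
    have h1 : d i ≤ (i.1 + 1) * d i := Nat.le_mul_of_pos_left _ (Nat.succ_pos _)
    have h2 : (i.1 + 1) * d i ≤ ∑ i, (i.1 + 1) * d i :=
      Finset.single_le_sum (f := fun i => (i.1 + 1) * d i) (fun i _ => Nat.zero_le _) (Finset.mem_univ i)
    exact Finset.mem_range.2 (by omega)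

lemma schurP_eq (k : ℤ) (hk : 0 ≤ k) :
    schurP n k = ∑ d ∈ schurS n k.toNat,
      monomial (Finsupp.equivFunOnFinite.symm d) (∏ i, ((Nat.factorial (d i) : ℝ))⁻¹) := by
  rw [schurP, if_neg (not_lt.2 hk)]
  refine Finset.sum_congr rfl fun d _ => ?_
  rw [monomial_eq]
  congr 1
  rw [Finsupp.prod_fintype]
  · simp
  · intro i; exact pow_zero _

lemma weight_update_add (b : Fin n → ℕ) (j : Fin n) :
    ∑ i, (i.1 + 1) * Function.update b j (b j + 1) i
      = (∑ i, (i.1 + 1) * b i) + (j.1 + 1) := by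
  have h1 : ∀ g : Fin n → ℕ, ∑ i, (i.1 + 1) * g i
      = (j.1 + 1) * g j + ∑ i ∈ Finset.univ.erase j, (i.1 + 1) * g i :=
    fun g => (Finset.add_sum_erase _ _ (Finset.mem_univ j)).symm
  rw [h1, h1 b]
  have h2 : ∑ i ∈ Finset.univ.erase j, (i.1 + 1) * Function.update b j (b j + 1) i
      = ∑ i ∈ Finset.univ.erase j, (i.1 + 1) * b i :=
    Finset.sum_congr rfl fun i hi => by
      rw [Function.update_of_ne (Finset.ne_of_mem_erase hi)]
  rw [h2, Function.update_self, Nat.mul_add]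
  ring

lemma pderiv_schurP (k : ℤ) (j : Fin n) :
    pderiv j (schurP n k) = schurP n (k - (j.1 + 1)) := by
  by_cases hk : k < 0
  · rw [schurP, if_pos hk, schurP, if_pos (by omega), map_zero]
  push_neg at hk
  have hKk : (k.toNat : ℤ) = k := Int.toNat_of_nonneg hk
  rw [schurP_eq k hk, map_sum]
  simp only [pderiv_monomial, Finsupp.coe_equivFunOnFinite_symm]
  by_cases hkj : k < (j.1 : ℤ) + 1
  · rw [schurP, if_pos (by omega)]
    refine Finset.sum_eq_zero fun d hd => ?_
    have hw := mem_schurS.1 hd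
    have hdj : d j = 0 := by
      by_contra h
      have h1 : (j.1 + 1) ≤ (j.1 + 1) * d j :=
        Nat.le_mul_of_pos_right _ (Nat.pos_of_ne_zero h)
      have h2 : (j.1 + 1) * d j ≤ ∑ i, (i.1 + 1) * d i :=
        Finset.single_le_sum (f := fun i : Fin n => (i.1 + 1) * d i)
          (fun i _ => Nat.zero_le _) (Finset.mem_univ j)
      omega
    simp [hdj]
  · push_neg at hkj
    rw [schurP_eq _ (by omega)]
    have hK' : (k - (j.1 + 1)).toNat + (j.1 + 1) = k.toNat := by omega
    rw [← Finset.sum_filter_of_ne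
      (p := fun d : Fin n → ℕ => d j ≠ 0)
      (fun d _ hne => by
        intro hdj
        apply hne
        simp [hdj])]
    refine Finset.sum_bij' (fun a _ => Function.update a j (a j - 1))
      (fun b _ => Function.update b j (b j + 1)) ?_ ?_ ?_ ?_ ?_
    · intro a ha
      obtain ⟨ha, haj⟩ := Finset.mem_filter.1 ha
      have hw := mem_schurS.1 ha
      refine mem_schurS.2 ?_
      have hup : Function.update (Function.update a j (a j - 1)) j
          ((Function.update a j (a j - 1)) j + 1) = a := by
        funext x
        rcases eq_or_ne x j with rfl | hx
        · simp only [Function.update_self]; omega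
        · simp [Function.update_of_ne hx]
      have := weight_update_add (Function.update a j (a j - 1)) j
      rw [hup] at this
      generalize hG : ∑ i, (i.1 + 1) * Function.update a j (a j - 1) i = S at this ⊢
      omega
    · intro b hb
      have hw := mem_schurS.1 hb
      refine Finset.mem_filter.2 ⟨mem_schurS.2 ?_, ?_⟩
      · rw [weight_update_add]
        generalize hG : ∑ i, (i.1 + 1) * b i = S at hw ⊢
        omega
      · simp
    · intro a ha
      obtain ⟨_, haj⟩ := Finset.mem_filter.1 ha
      funext x
      rcases eq_or_ne x j with rfl | hx
      · simp only [Function.update_self]; omega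
      · simp [Function.update_of_ne hx]
    · intro b _
      funext x
      rcases eq_or_ne x j with rfl | hx
      · simp [Function.update_self]
      · simp [Function.update_of_ne hx]
    · intro a ha
      obtain ⟨ha', haj⟩ := Finset.mem_filter.1 ha
      have hpos : 0 < a j := Nat.pos_of_ne_zero haj
      have hexp : Finsupp.equivFunOnFinite.symm a - Finsupp.single j 1
          = Finsupp.equivFunOnFinite.symm (Function.update a j (a j - 1)) := by
        ext x
        rcases eq_or_ne x j with rfl | hx
        · simp [Finsupp.tsub_apply, Function.update_self]
        · simp [Finsupp.tsub_apply, Finsupp.single_apply, hx.symm, Ne.symm hx,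
            Function.update_of_ne hx]
      rw [hexp]
      congr 1
      have hsplit : ∀ g : Fin n → ℕ, (∏ i, ((Nat.factorial (g i) : ℝ))⁻¹)
          = (∏ i ∈ Finset.univ.erase j, ((Nat.factorial (g i) : ℝ))⁻¹)
            * ((Nat.factorial (g j) : ℝ))⁻¹ :=
        fun g => (Finset.prod_erase_mul _ _ (Finset.mem_univ j)).symm
      rw [hsplit, hsplit (Function.update a j (a j - 1))]
      have herase : ∏ i ∈ Finset.univ.erase j,
            ((Nat.factorial (Function.update a j (a j - 1) i) : ℝ))⁻¹
          = ∏ i ∈ Finset.univ.erase j, ((Nat.factorial (a i) : ℝ))⁻¹ :=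
        Finset.prod_congr rfl fun i hi => by
          rw [Function.update_of_ne (Finset.ne_of_mem_erase hi)]
      rw [herase, Function.update_self]
      have hfac : (Nat.factorial (a j) : ℝ)
          = (a j : ℝ) * (Nat.factorial (a j - 1) : ℝ) := by
        obtain ⟨b, hb⟩ : ∃ b, a j = b + 1 := ⟨a j - 1, by omega⟩
        rw [hb]
        push_cast [Nat.factorial_succ]
        ring
      have hne1 : (Nat.factorial (a j - 1) : ℝ) ≠ 0 :=
        Nat.cast_ne_zero.2 (Nat.factorial_ne_zero _)
      have hne2 : (a j : ℝ) ≠ 0 := Nat.cast_ne_zero.2 haj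
      rw [hfac]
      field_simp

lemma hasFDerivAt_eval (P : MvPolynomial (Fin n) ℝ) (y : Fin n → ℝ) :
    HasFDerivAt (fun z => eval z P)
      (∑ j : Fin n, eval y (pderiv j P) •
        (ContinuousLinearMap.proj j : ((Fin n) → ℝ) →L[ℝ] ℝ)) y := by
  induction P using MvPolynomial.induction_on with
  | C a =>
      simp only [eval_C, pderiv_C, map_zero, zero_smul, Finset.sum_const_zero]
      exact hasFDerivAt_const a y
  | add p q hp hq =>
      convert hp.add hq using 1 <;> try with_reducible_and_instances rfl
      · funext z; simp
      · rw [← Finset.sum_add_distrib]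
        refine Finset.sum_congr rfl fun j _ => ?_
        rw [map_add, map_add, add_smul]
  | mul_X p j hp =>
      have hXj : HasFDerivAt (fun z : Fin n → ℝ => z j)
          (ContinuousLinearMap.proj j : ((Fin n) → ℝ) →L[ℝ] ℝ) y :=
        (ContinuousLinearMap.proj j : ((Fin n) → ℝ) →L[ℝ] ℝ).hasFDerivAt
      convert hp.mul hXj using 1 <;> try with_reducible_and_instances rfl
      · funext z; simp
      · ext v
        simp only [ContinuousLinearMap.sum_apply, ContinuousLinearMap.smul_apply,
          ContinuousLinearMap.proj_apply, ContinuousLinearMap.add_apply,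
          smul_eq_mul, pderiv_mul, map_add, map_mul, eval_X, pderiv_X,
          Pi.single_apply, apply_ite (eval y), map_one, map_zero, mul_ite,
          mul_one, mul_zero, add_mul, ite_mul, zero_mul]
        rw [Finset.sum_add_distrib, Finset.sum_ite_eq Finset.univ j
          (fun j' => eval y p * v j')]
        simp only [Finset.mem_univ, if_true, Finset.mul_sum]
        rw [add_comm]
        congr 1
        exact Finset.sum_congr rfl fun j' _ => by ring

lemma hasFDerivAt_schurPf (k : ℤ) (y : Fin n → ℝ) :
    HasFDerivAt (schurPf n k)
      (∑ j : Fin n, schurPf n (k - (j.1 + 1)) y •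
        (ContinuousLinearMap.proj j : ((Fin n) → ℝ) →L[ℝ] ℝ)) y := by
  have h := hasFDerivAt_eval (schurP n k) y
  simp only [pderiv_schurP] at h
  exact h

/-- differentiating the critical equations
`Σ_{k=0}^m t_k p_{k+1-i}(u(t)) = 0` (indices 1-based; for `i : Fin n` the
exponent is `k - i`) of `Φ(t;y) = Σ t_k p_{k+1}(y)` gives
`p_{k+1-i}(u(t)) + Σ_j Φ_{i,j}(t) ∂u_j/∂t_k = 0`, where
`Φ_{i,j}(t) = Σ_l t_l p_{l+1-i-j}(u(t)) = ∂²Φ/∂y_i∂y_j(u(t))`; moreover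
`Φ_{i,j}(t) = 0` whenever `i + j ≤ n` (1-based), so the linear system is
triangular with constant anti-ordered diagonals. -/
theorem critical_point_linear_system (n m : ℕ) (hn : 1 ≤ n) (hm : n ≤ m)
    (Ω : Set (Fin (m + 1) → ℝ)) (hΩ : IsOpen Ω)
    (u : (Fin (m + 1) → ℝ) → (Fin n → ℝ)) (hu : ContDiffOn ℝ (⊤ : ℕ∞) u Ω)
    (hcrit : ∀ t ∈ Ω, ∀ i : Fin n,
      ∑ k : Fin (m + 1), t k * schurPf n ((k.1 : ℤ) - i.1) (u t) = 0) :
    ∀ t ∈ Ω,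
      (∀ i : Fin n, ∀ k : Fin (m + 1),
        schurPf n ((k.1 : ℤ) - i.1) (u t)
          + ∑ j : Fin n,
              (∑ l : Fin (m + 1),
                t l * schurPf n ((l.1 : ℤ) - 1 - i.1 - j.1) (u t)) *
                fderiv ℝ (fun s => u s j) t (Pi.single k 1) = 0)
      ∧ (∀ i j : Fin n, (i.1 + 1) + (j.1 + 1) ≤ n →
          ∑ l : Fin (m + 1),
            t l * schurPf n ((l.1 : ℤ) - 1 - i.1 - j.1) (u t) = 0) := by
  intro t ht
  have htn : Ω ∈ nhds t := hΩ.mem_nhds ht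
  have hud : DifferentiableAt ℝ u t := (hu.contDiffAt htn).differentiableAt (by simp)
  have hU : HasFDerivAt u (fderiv ℝ u t) t := hud.hasFDerivAt
  constructor
  · intro i k
    set U := fderiv ℝ u t with hUdef
    have hfj : ∀ j : Fin n,
        fderiv ℝ (fun s => u s j) t (Pi.single k 1) = U (Pi.single k 1) j := by
      intro j
      have hc : HasFDerivAt (fun s => u s j)
          ((ContinuousLinearMap.proj j : ((Fin n) → ℝ) →L[ℝ] ℝ).comp U) t :=
        (ContinuousLinearMap.proj j : ((Fin n) → ℝ) →L[ℝ] ℝ).hasFDerivAt.comp t hU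
      rw [hc.fderiv]
      rfl
    have hterm : ∀ l : Fin (m + 1), HasFDerivAt
        (fun s => s l * schurPf n ((l.1 : ℤ) - i.1) (u s))
        (t l • ((∑ j : Fin n, schurPf n (((l.1 : ℤ) - i.1) - (j.1 + 1)) (u t) •
            (ContinuousLinearMap.proj j : ((Fin n) → ℝ) →L[ℝ] ℝ)).comp U)
          + schurPf n ((l.1 : ℤ) - i.1) (u t) •
            (ContinuousLinearMap.proj l : ((Fin (m+1)) → ℝ) →L[ℝ] ℝ)) t := by
      intro l
      have h1 : HasFDerivAt (fun s : Fin (m + 1) → ℝ => s l)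
          (ContinuousLinearMap.proj l : ((Fin (m+1)) → ℝ) →L[ℝ] ℝ) t :=
        (ContinuousLinearMap.proj l : ((Fin (m+1)) → ℝ) →L[ℝ] ℝ).hasFDerivAt
      have h2 := (hasFDerivAt_schurPf ((l.1 : ℤ) - i.1) (u t)).comp t hU
      exact h1.mul h2
    have hsum := HasFDerivAt.sum (u := Finset.univ) (fun l _ => hterm l)
    have hzero := hsum.congr_of_eventuallyEq (f₁ := fun _ => (0 : ℝ))
      (by filter_upwards [htn] with s hs; rw [Finset.sum_apply]; exact (hcrit s hs i).symm)
    have hD0 := hzero.unique (hasFDerivAt_const (0 : ℝ) t)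
    have hap := congrArg
      (fun L : (Fin (m + 1) → ℝ) →L[ℝ] ℝ => L (Pi.single k 1)) hD0
    simp only [ContinuousLinearMap.coe_sum', Finset.sum_apply,
      ContinuousLinearMap.add_apply, ContinuousLinearMap.smul_apply,
      ContinuousLinearMap.proj_apply, ContinuousLinearMap.comp_apply,
      ContinuousLinearMap.zero_apply, smul_eq_mul,
      ContinuousLinearMap.sum_apply] at hap
    have hexp : ∀ (l : Fin (m + 1)) (j : Fin n),
        schurPf n (((l.1 : ℤ) - i.1) - (j.1 + 1)) (u t)
          = schurPf n ((l.1 : ℤ) - 1 - i.1 - j.1) (u t) := by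
      intro l j; congr 1; ring
    simp only [hexp] at hap
    rw [Finset.sum_add_distrib] at hap
    have h1 : ∑ l : Fin (m + 1),
        schurPf n ((l.1 : ℤ) - i.1) (u t) * Pi.single (M := fun _ : Fin (m+1) => ℝ) k 1 l
          = schurPf n ((k.1 : ℤ) - i.1) (u t) := by
      simp [Pi.single_apply, mul_ite, Finset.sum_ite_eq]
    have h2 : ∑ l : Fin (m + 1), t l * ∑ j : Fin n,
          schurPf n ((l.1 : ℤ) - 1 - i.1 - j.1) (u t) * U (Pi.single k 1) j
        = ∑ j : Fin n, (∑ l : Fin (m + 1),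
            t l * schurPf n ((l.1 : ℤ) - 1 - i.1 - j.1) (u t)) *
              U (Pi.single k 1) j := by
      simp_rw [Finset.mul_sum]
      rw [Finset.sum_comm]
      simp_rw [Finset.sum_mul]
      exact Finset.sum_congr rfl fun j _ =>
        Finset.sum_congr rfl fun l _ => by ring
    simp only [hfj]
    rw [add_comm] at hap
    rw [h1] at hap
    rw [h2] at hap
    linarith [hap]
  · intro i j hij
    have hr : i.1 + j.1 + 1 < n := by omega
    have h := hcrit t ht ⟨i.1 + j.1 + 1, hr⟩
    refine Eq.trans ?_ h
    refine Finset.sum_congr rfl fun l _ => ?_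
    congr 2
    push_cast
    ring
end
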